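/- Let 𝒪 = {(x,v,a) ∈ ℝ³ : v ≠ 0} and let π : 𝒪 → ℝ² be π(x,v,a) = (x/v, a/v). Let X₁(x,v,a) = (0,0,2v), X₂(x,v,a) = (0,v,2a), X₃(x,v,a) = (v,a,3a²/(2v)) be vector fields on 𝒪, and define on ℝ² with coordinates (x̄,ā) the vector fields X̄₁ = (0,2), X̄₂(x̄,ā) = (−x̄, ā), X̄₃(x̄,ā) = (1 − x̄ā, ā²/2). Then (Dπ)(p)(Xα(p)) = X̄α(π(p)) for every p ∈ 𝒪 and α ∈ {1,2,3}; moreover, at every point of ℝ², [X̄₁,X̄₂] = X̄₁, [X̄₁,X̄₃] = 2X̄₂, and [X̄₂,X̄₃] = X̄₃, so the projected Vessiot–Guldberg Lie algebra is again isomorphic to 𝔰𝔩₂. -/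

import Mathlib

/-- The pointwise Lie bracket of two vector fields on (an open subset of) ℝⁿ,
    `[V,W](p) = (DW)(p)(V(p)) − (DV)(p)(W(p))`. -/
noncomputable def vbracket {n : ℕ} (V W : (Fin n → ℝ) → (Fin n → ℝ)) :
    (Fin n → ℝ) → (Fin n → ℝ) :=
  fun p => fderiv ℝ W p (V p) - fderiv ℝ V p (W p)

/-- Coordinates on 𝒪 ⊂ ℝ³ are (x,v,a) = (p 0, p 1, p 2). The Vessiot–Guldberg
vector fields X₁, X₂, X₃ of the Schwarz system, indexed by `Fin 3`. -/
noncomputable def schX : Fin 3 → (Fin 3 → ℝ) → (Fin 3 → ℝ) :=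
  ![fun p => ![0, 0, 2 * p 1],
    fun p => ![0, p 1, 2 * p 2],
    fun p => ![p 1, p 2, 3 * (p 2) ^ 2 / (2 * p 1)]]

/-- The projection π : 𝒪 → ℝ², (x,v,a) ↦ (x/v, a/v). -/
noncomputable def schPi : (Fin 3 → ℝ) → (Fin 2 → ℝ) :=
  fun p => ![p 0 / p 1, p 2 / p 1]

/-- The reduced vector fields X̄₁, X̄₂, X̄₃ on ℝ² with coordinates (x̄,ā). -/
noncomputable def schXbar : Fin 3 → (Fin 2 → ℝ) → (Fin 2 → ℝ) :=
  ![fun _ => ![0, 2],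
    fun q => ![-q 0, q 1],
    fun q => ![1 - q 0 * q 1, (q 1) ^ 2 / 2]]

section Derivatives

variable {𝕜 E F : Type*} [NontriviallyNormedField 𝕜] [NormedAddCommGroup E] [NormedSpace 𝕜 E]
  [NormedAddCommGroup F] [NormedSpace 𝕜 F] {x : E}

theorem HasFDerivAt.div {c d : E → 𝕜} {c' d' : E →L[𝕜] 𝕜} (hc : HasFDerivAt c c' x)
    (hd : HasFDerivAt d d' x) (hx : d x ≠ 0) :
    HasFDerivAt (fun y => c y / d y) ((d x ^ 2)⁻¹ • (d x • c' - c x • d')) x := by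
  have hinv : HasFDerivAt (fun y => (d y)⁻¹) (-(d x ^ 2)⁻¹ • d') x :=
    (hasDerivAt_inv hx).hasFDerivAt.comp x hd |>.congr_fderiv (by ext; simp [mul_comm])
  simp only [div_eq_mul_inv]
  refine (hc.mul hinv).congr_fderiv ?_
  ext v
  simp only [add_apply, sub_apply, smul_apply, smul_eq_mul]
  field_simp
  ring

theorem HasFDerivAt.vec2 {f g : E → F} {f' g' : E →L[𝕜] F} (hf : HasFDerivAt f f' x)
    (hg : HasFDerivAt g g' x) :
    HasFDerivAt (fun y => ![f y, g y]) (ContinuousLinearMap.pi ![f', g']) x := by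
  refine hasFDerivAt_pi'' fun i => ?_
  fin_cases i
  · simpa using hf
  · simpa using hg

end Derivatives

theorem fderiv_schPi_apply {p : Fin 3 → ℝ} (hp : p 1 ≠ 0) (w : Fin 3 → ℝ) :
    fderiv ℝ schPi p w =
      ![(p 1 * w 0 - p 0 * w 1) / p 1 ^ 2, (p 1 * w 2 - p 2 * w 1) / p 1 ^ 2] := by
  have hcoord (i : Fin 3) := hasFDerivAt_apply (𝕜 := ℝ) i p
  have h : HasFDerivAt schPi _ p :=
    ((hcoord 0).div (hcoord 1) hp).vec2 ((hcoord 2).div (hcoord 1) hp)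
  rw [h.fderiv]
  ext i
  fin_cases i <;> simp [div_eq_inv_mul]

theorem fderiv_schXbar_zero (q : Fin 2 → ℝ) : fderiv ℝ (schXbar 0) q = 0 :=
  fderiv_const_apply _

theorem fderiv_schXbar_one_apply (q w : Fin 2 → ℝ) :
    fderiv ℝ (schXbar 1) q w = ![-w 0, w 1] := by
  have hcoord (i : Fin 2) := hasFDerivAt_apply (𝕜 := ℝ) i q
  have h : HasFDerivAt (schXbar 1) _ q := (hcoord 0).neg.vec2 (hcoord 1)
  rw [h.fderiv]
  ext i
  fin_cases i <;> simp

theorem fderiv_schXbar_two_apply (q w : Fin 2 → ℝ) :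
    fderiv ℝ (schXbar 2) q w = ![-(w 0 * q 1 + q 0 * w 1), q 1 * w 1] := by
  have hcoord (i : Fin 2) := hasFDerivAt_apply (𝕜 := ℝ) i q
  have h : HasFDerivAt (schXbar 2) _ q := (((hcoord 0).mul (hcoord 1)).const_sub 1).vec2
    (((hcoord 1).pow 2).div (hasFDerivAt_const 2 q) two_ne_zero)
  rw [h.fderiv]
  ext i
  fin_cases i <;>
    simp only [Fin.zero_eta, Fin.mk_one, ContinuousLinearMap.coe_pi', Matrix.cons_val_zero,
      Matrix.cons_val_one, Matrix.cons_val_fin_one, add_apply, sub_apply, neg_apply, smul_apply,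
      zero_apply, ContinuousLinearMap.proj_apply, smul_eq_mul, nsmul_eq_mul] <;>
    ring

theorem fderiv_schPi_schX {p : Fin 3 → ℝ} (hp : p 1 ≠ 0) (α : Fin 3) :
    fderiv ℝ schPi p (schX α p) = schXbar α (schPi p) := by
  rw [fderiv_schPi_apply hp]
  fin_cases α <;> ext i <;> fin_cases i <;>
    simp only [schX, schXbar, schPi, Fin.zero_eta, Fin.mk_one, Fin.reduceFinMk, Matrix.cons_val] <;>
    field_simp <;> ring

theorem vbracket_schXbar_zero_one (q : Fin 2 → ℝ) :
    vbracket (schXbar 0) (schXbar 1) q = schXbar 0 q := by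
  simp only [vbracket, fderiv_schXbar_zero, fderiv_schXbar_one_apply]
  ext i
  fin_cases i <;> simp [schXbar]

theorem vbracket_schXbar_zero_two (q : Fin 2 → ℝ) :
    vbracket (schXbar 0) (schXbar 2) q = (2 : ℝ) • schXbar 1 q := by
  simp only [vbracket, fderiv_schXbar_zero, fderiv_schXbar_two_apply]
  ext i
  fin_cases i <;> simp [schXbar, mul_comm]

theorem vbracket_schXbar_one_two (q : Fin 2 → ℝ) :
    vbracket (schXbar 1) (schXbar 2) q = schXbar 2 q := by
  simp only [vbracket, fderiv_schXbar_one_apply, fderiv_schXbar_two_apply]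
  ext i
  fin_cases i
  · simp [schXbar]
  · simp [schXbar]
    ring

/-- Each Xα is π-related to X̄α on 𝒪 = {v ≠ 0}, and the reduced vector fields
satisfy [X̄₁,X̄₂] = X̄₁, [X̄₁,X̄₃] = 2X̄₂, [X̄₂,X̄₃] = X̄₃ at every point of ℝ²:
the projected Vessiot–Guldberg Lie algebra is again isomorphic to 𝔰𝔩₂. -/
theorem schwarz_reduction_projection :
    (∀ p : Fin 3 → ℝ, p 1 ≠ 0 → ∀ α : Fin 3,
      fderiv ℝ schPi p (schX α p) = schXbar α (schPi p)) ∧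
    (∀ q : Fin 2 → ℝ,
      vbracket (schXbar 0) (schXbar 1) q = schXbar 0 q ∧
      vbracket (schXbar 0) (schXbar 2) q = (2 : ℝ) • schXbar 1 q ∧
      vbracket (schXbar 1) (schXbar 2) q = schXbar 2 q) :=
  ⟨fun _ hp α => fderiv_schPi_schX hp α, fun q =>
    ⟨vbracket_schXbar_zero_one q, vbracket_schXbar_zero_two q, vbracket_schXbar_one_two q⟩⟩
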